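/- Let n ≥ 3 and let P be an n×n row-stochastic matrix with P(j,k) = 0 whenever |j−k| > 1 (a line-graph strategy). Fix i ∈ {2,…,n−1} and 0 < ε ≤ P(i,i−1), and let P^ε be the matrix equal to P except P^ε(i,i+1) = P(i,i+1) + ε and P^ε(i,i−1) = P(i,i−1) − ε. Then for every τ ≥ 1, Σ_{t=1}^{τ} F^ε_t(1,n) ≥ Σ_{t=1}^{τ} F_t(1,n) and Σ_{t=1}^{τ} F^ε_t(n,1) ≤ Σ_{t=1}^{τ} F_t(n,1): shifting probability mass toward node n monotonically increases the 1→n capture probability and decreases the n→1 capture probability. -/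

import Mathlib

/-- First-hitting-time probability matrices: `hitF P t` is `F_{t+1}`, i.e.
`F_1 = P` and `F_{k+1} = P (F_k - Diag(F_k))`. -/
def hitF {α : Type*} [Fintype α] [DecidableEq α] (P : Matrix α α ℝ) : ℕ → Matrix α α ℝ
  | 0 => P
  | k + 1 => P * (hitF P k - Matrix.diagonal fun i => hitF P k i i)

/-!
First-step analysis gives `capture Q d (τ + 1) = Q *ᵥ reach Q d τ`, where `reach Q d τ` also
counts a visit at time `0`. On a line whose walk cannot jump more than one node to the right,
`reach` towards the last node is monotone in the starting node, by induction on `τ`: from `k`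
the walk lands at most at `k + 1`, and `reach` grows with `τ`. Moving mass `ε` in row `i` from
`i - 1` to `i + 1` changes `Q *ᵥ x` only in row `i`, by `ε (x (i + 1) - x (i - 1))`, which is
nonnegative for monotone `x`; induction on `τ` then compares the capture probabilities.
Reversing the line gives the statement for the first node.
-/

open Finset Matrix

section Capture

variable {α β : Type*} [Fintype α] [DecidableEq α] [Fintype β] [DecidableEq β]

theorem hitF_succ_apply (Q : Matrix α α ℝ) (t : ℕ) (j d : α) :
    hitF Q (t + 1) j d = ∑ k, Q j k * if k = d then 0 else hitF Q t k d := by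
  simp only [hitF, mul_apply, Matrix.sub_apply, diagonal_apply]
  refine sum_congr rfl fun k _ => ?_
  split_ifs with hk <;> simp [hk]

theorem hitF_nonneg {Q : Matrix α α ℝ} (hQ : ∀ a b, 0 ≤ Q a b) (t : ℕ) (j d : α) :
    0 ≤ hitF Q t j d := by
  induction t generalizing j with
  | zero => exact hQ j d
  | succ t ih =>
    rw [hitF_succ_apply]
    exact sum_nonneg fun k _ => mul_nonneg (hQ j k) (by split_ifs <;> simp [ih])

theorem hitF_submatrix (Q : Matrix α α ℝ) (e : β ≃ α) (t : ℕ) :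
    hitF (Q.submatrix e e) t = (hitF Q t).submatrix e e := by
  induction t with
  | zero => rfl
  | succ t ih =>
    rw [hitF, hitF, ih, ← submatrix_mul_equiv _ _ _ e]
    congr 1
    ext a b
    simp [diagonal_apply]

/-- `capture Q d τ j` is `ℙ(T_jd ≤ τ)`. -/
def capture (Q : Matrix α α ℝ) (d : α) (τ : ℕ) (j : α) : ℝ :=
  ∑ t ∈ range τ, hitF Q t j d

def reach (Q : Matrix α α ℝ) (d : α) (τ : ℕ) (j : α) : ℝ :=
  if j = d then 1 else capture Q d τ j

theorem capture_zero (Q : Matrix α α ℝ) (d : α) : capture Q d 0 = 0 := by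
  ext j
  simp [capture]

theorem capture_succ (Q : Matrix α α ℝ) (d : α) (τ : ℕ) :
    capture Q d (τ + 1) = Q *ᵥ reach Q d τ := by
  ext j
  have hsplit : reach Q d τ = Pi.single d 1 + fun k => if k = d then 0 else capture Q d τ k := by
    ext k
    by_cases hk : k = d <;> simp [reach, hk]
  rw [hsplit, mulVec_add, mulVec_single_one, capture, sum_range_succ', add_comm]
  simp only [hitF_succ_apply, Pi.add_apply, mulVec, dotProduct, capture, mul_ite, mul_zero,
    mul_sum]
  rw [sum_comm]
  simp only [sum_ite_irrel, sum_const_zero]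
  rfl

theorem reach_le_reach_succ {Q : Matrix α α ℝ} (hQ : ∀ a b, 0 ≤ Q a b) (d : α) (τ : ℕ) :
    reach Q d τ ≤ reach Q d (τ + 1) := by
  intro j
  unfold reach capture
  split_ifs
  · rfl
  · rw [sum_range_succ]
    exact le_add_of_nonneg_right (hitF_nonneg hQ τ j d)

theorem reach_le_reach {Q Q' : Matrix α α ℝ} {d : α} {τ : ℕ}
    (h : capture Q d τ ≤ capture Q' d τ) : reach Q d τ ≤ reach Q' d τ := by
  intro j
  unfold reach
  split_ifs
  · rfl
  · exact h j

theorem reach_submatrix (Q : Matrix α α ℝ) (e : β ≃ α) (d : β) (τ : ℕ) (j : β) :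
    reach (Q.submatrix e e) d τ j = reach Q (e d) τ (e j) := by
  simp [reach, capture, hitF_submatrix]

theorem capture_le_capture {Q Q' : Matrix α α ℝ} {d : α} (hQ' : ∀ a b, 0 ≤ Q' a b)
    (h : ∀ τ, Q *ᵥ reach Q d τ ≤ Q' *ᵥ reach Q d τ) (τ : ℕ) :
    capture Q d τ ≤ capture Q' d τ := by
  induction τ with
  | zero => simp [capture_zero]
  | succ τ ih =>
    rw [capture_succ, capture_succ]
    exact (h τ).trans fun j => dotProduct_le_dotProduct_of_nonneg_left (reach_le_reach ih) (hQ' j)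

theorem mulVec_apply_le_of_ne_zero {Q : Matrix α α ℝ} (hQ : Q ∈ rowStochastic ℝ α) {x : α → ℝ}
    {c : ℝ} {j : α} (h : ∀ k, Q j k ≠ 0 → x k ≤ c) : (Q *ᵥ x) j ≤ c :=
  calc (Q *ᵥ x) j = ∑ k, Q j k * x k := rfl
    _ ≤ ∑ k, Q j k * c := sum_le_sum fun k _ => by
        rcases eq_or_ne (Q j k) 0 with hk | hk
        · simp [hk]
        · exact mul_le_mul_of_nonneg_left (h k hk) (nonneg_of_mem_rowStochastic hQ)
    _ = c := by rw [← sum_mul, sum_row_of_mem_rowStochastic hQ, one_mul]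

theorem mulVec_eq_add_single_of_shift {P Pε : Matrix α α ℝ} {i r l : α} {ε : ℝ} (hrl : r ≠ l)
    (hr : Pε i r = P i r + ε) (hl : Pε i l = P i l - ε)
    (hrest : ∀ a b, ¬(a = i ∧ (b = r ∨ b = l)) → Pε a b = P a b) (x : α → ℝ) :
    Pε *ᵥ x = P *ᵥ x + Pi.single i (ε * (x r - x l)) := by
  ext a
  by_cases ha : a = i
  · subst ha
    have hrow : ∀ k, Pε a k = P a k + (if k = r then ε else 0) - (if k = l then ε else 0) := by
      intro k
      by_cases hkr : k = r
      · simp [hkr, hr, hrl]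
      by_cases hkl : k = l
      · simp [hkl, hl, Ne.symm hrl]
      simp [hkr, hkl, hrest a k]
    simp [mulVec, dotProduct, hrow, add_mul, sub_mul, sum_add_distrib, sum_sub_distrib]
    ring
  · simp [mulVec, dotProduct, ha, hrest a _ (fun h => ha h.1)]

theorem mem_rowStochastic_of_shift {P Pε : Matrix α α ℝ} (hP : P ∈ rowStochastic ℝ α)
    {i r l : α} {ε : ℝ} (hε0 : 0 ≤ ε) (hε1 : ε ≤ P i l) (hrl : r ≠ l)
    (hr : Pε i r = P i r + ε) (hl : Pε i l = P i l - ε)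
    (hrest : ∀ a b, ¬(a = i ∧ (b = r ∨ b = l)) → Pε a b = P a b) :
    Pε ∈ rowStochastic ℝ α := by
  refine ⟨fun a b => ?_, by simp [mulVec_eq_add_single_of_shift hrl hr hl hrest, hP.2]⟩
  by_cases h : a = i ∧ (b = r ∨ b = l)
  · obtain ⟨rfl, rfl | rfl⟩ := h
    · linarith [nonneg_of_mem_rowStochastic hP (i := a) (j := b)]
    · linarith
  · rw [hrest a b h]
    exact nonneg_of_mem_rowStochastic hP

end Capture

section Line

variable {m : ℕ} {Q : Matrix (Fin (m + 1)) (Fin (m + 1)) ℝ}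

theorem monotone_reach_last (hQ : Q ∈ rowStochastic ℝ (Fin (m + 1)))
    (hup : ∀ j k : Fin (m + 1), j.val + 1 < k.val → Q j k = 0) (τ : ℕ) :
    Monotone (reach Q (Fin.last m) τ) := by
  induction τ with
  | zero =>
    intro a b hab
    simp only [reach, capture_zero, Pi.zero_apply]
    split_ifs <;> simp_all [Fin.last_le_iff]
  | succ τ ih =>
    refine Fin.monotone_iff_le_succ.2 fun k => ?_
    calc reach Q (Fin.last m) (τ + 1) k.castSucc
        = (Q *ᵥ reach Q (Fin.last m) τ) k.castSucc := by
          rw [reach, if_neg (Fin.castSucc_ne_last k), capture_succ]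
      _ ≤ reach Q (Fin.last m) τ k.succ := mulVec_apply_le_of_ne_zero hQ fun j hj =>
          ih (not_lt.1 fun hjk => hj (hup _ _ (by simpa [Fin.lt_def] using hjk)))
      _ ≤ reach Q (Fin.last m) (τ + 1) k.succ :=
          reach_le_reach_succ (fun _ _ => nonneg_of_mem_rowStochastic hQ) _ _ _

theorem antitone_reach_zero (hQ : Q ∈ rowStochastic ℝ (Fin (m + 1)))
    (hdown : ∀ j k : Fin (m + 1), k.val + 1 < j.val → Q j k = 0) (τ : ℕ) :
    Antitone (reach Q 0 τ) := by
  intro a b hab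
  have hup : ∀ j k : Fin (m + 1), j.val + 1 < k.val →
      Q.reindex Fin.revPerm Fin.revPerm j k = 0 := fun j k hjk => hdown _ _ (by
    simp only [Fin.revPerm_symm, Fin.revPerm_apply, Fin.val_rev]; omega)
  have hrev := monotone_reach_last (reindex_mem_rowStochastic hQ) hup τ (Fin.rev_le_rev.2 hab)
  simpa [reindex_apply, reach_submatrix] using hrev

end Line

/-- Monotonicity of end-to-end capture probabilities in a line graph: shifting
probability mass `ε` at an interior node `i` from the left edge to the right edge
increases `ℙ(T_1n ≤ τ)` and decreases `ℙ(T_n1 ≤ τ)` for every `τ ≥ 1`. -/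
theorem stmt_16 (n : ℕ) (hn : 3 ≤ n)
    (P Pε : Matrix (Fin n) (Fin n) ℝ)
    (hP0 : ∀ a b, 0 ≤ P a b) (hP1 : ∀ a, ∑ b, P a b = 1)
    (hline : ∀ j k : Fin n, (j.val + 1 < k.val ∨ k.val + 1 < j.val) → P j k = 0)
    (i : Fin n) (hi1 : 1 ≤ i.val) (hi2 : i.val ≤ n - 2)
    (ε : ℝ) (hε0 : 0 < ε) (hε1 : ε ≤ P i ⟨i.val - 1, by omega⟩)
    (hPεr : Pε i ⟨i.val + 1, by omega⟩ = P i ⟨i.val + 1, by omega⟩ + ε)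
    (hPεl : Pε i ⟨i.val - 1, by omega⟩ = P i ⟨i.val - 1, by omega⟩ - ε)
    (hPεrest : ∀ a b : Fin n,
      ¬(a = i ∧ (b = (⟨i.val + 1, by omega⟩ : Fin n) ∨ b = (⟨i.val - 1, by omega⟩ : Fin n))) →
      Pε a b = P a b)
    (τ : ℕ) :
    (∑ t ∈ Finset.range τ, hitF P t ⟨0, by omega⟩ ⟨n - 1, by omega⟩ ≤
      ∑ t ∈ Finset.range τ, hitF Pε t ⟨0, by omega⟩ ⟨n - 1, by omega⟩) ∧
    (∑ t ∈ Finset.range τ, hitF Pε t ⟨n - 1, by omega⟩ ⟨0, by omega⟩ ≤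
      ∑ t ∈ Finset.range τ, hitF P t ⟨n - 1, by omega⟩ ⟨0, by omega⟩) := by
  obtain ⟨m, rfl⟩ : ∃ m, n = m + 1 := ⟨n - 1, by omega⟩
  set r : Fin (m + 1) := ⟨i.val + 1, by omega⟩
  set l : Fin (m + 1) := ⟨i.val - 1, by omega⟩
  have hlr : l < r := Fin.mk_lt_mk.2 (by omega)
  have hshift := mulVec_eq_add_single_of_shift hlr.ne' hPεr hPεl hPεrest
  have hP : P ∈ rowStochastic ℝ (Fin (m + 1)) := mem_rowStochastic_iff_sum.2 ⟨hP0, hP1⟩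
  have hPε := mem_rowStochastic_of_shift hP hε0.le hε1 hlr.ne' hPεr hPεl hPεrest
  have hPεline : ∀ j k : Fin (m + 1), k.val + 1 < j.val → Pε j k = 0 := by
    intro j k hjk
    by_cases h : j = i ∧ (k = r ∨ k = l)
    · obtain ⟨rfl, rfl | rfl⟩ := h <;> simp [r, l] at hjk <;> omega
    · rw [hPεrest j k h]
      exact hline j k (Or.inr hjk)
  constructor
  · refine capture_le_capture hPε.1 (fun τ => ?_) τ _
    have hmono := monotone_reach_last hP (fun j k h => hline j k (Or.inl h)) τ hlr.le
    rw [hshift]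
    exact le_add_of_nonneg_right (Pi.single_nonneg.2 (mul_nonneg hε0.le (sub_nonneg.2 hmono)))
  · refine capture_le_capture hP0 (fun τ => ?_) τ _
    have hanti := antitone_reach_zero hPε hPεline τ hlr.le
    rw [hshift]
    exact add_le_of_nonpos_right
      (Pi.single_nonpos.2 (mul_nonpos_of_nonneg_of_nonpos hε0.le (sub_nonpos.2 hanti)))
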